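/- arXiv:2511.15149 — 2 statements merged into one kernel-verified Lean document; each statement's English description precedes it below -/
import Mathlib

section
/- Let n ≥ 1 be a natural number, let z be a complex number with Re(z) > 0, and let u, v, w be complex numbers with u^n ∈ 𝔻, w^n ∈ 𝔻, and v ∈ 𝔻'. Then F(nz; u^n, v, w^n) = ∑_{α^n=1} ∑_{β^n=1} F(z; uα, v, wβ), where both sums run over all n-th roots of unity. -/
open Complex MeasureTheory Polynomial

/-- `t^z := exp(z · log t)` with `log t` the real logarithm. -/
noncomputable def tpow (z : ℂ) (t : ℝ) : ℂ := Complex.exp (z * Real.log t)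

/-- `F(z;u,v,w) = ∫₀¹ log(1 − u t^z) log(1 − w t^z)/(v⁻¹ − t) dt`. -/
noncomputable def F3 (z u v w : ℂ) : ℂ :=
  ∫ t in (0:ℝ)..1,
    Complex.log (1 - u * tpow z t) * Complex.log (1 - w * tpow z t) / (v⁻¹ - (t : ℂ))

/-!
For `0 < t < 1` and `‖c‖ ≤ 1` we have `‖c t^z‖ < 1`. Expanding `-log (1 - x)` in its power series
and using `∑_{α^n=1} α^k = n` if `n ∣ k` and `0` otherwise gives
`∑_{α^n=1} log (1 - α x) = log (1 - x^n)` for `‖x‖ < 1`. With `x = u t^z`, so that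
`x^n = u^n t^{nz}`, the integrand on the left is pointwise the double sum of the integrands on the
right, and the finite sum may be taken out of the integral once each integrand is integrable.
For that, `‖log (1 - c t^z)‖ ≤ -log (1 - t^{Re z}) = O((1 - t)^{-1/4})` as `t → 1`, and
`v⁻¹ ∉ [0, 1]` keeps the denominator away from zero.
-/

theorem IsPrimitiveRoot.sum_nthRootsFinset_pow {K : Type*} [Field K] {ζ : K} {n : ℕ}
    (hζ : IsPrimitiveRoot ζ n) (hn : n ≠ 0) (k : ℕ) :
    ∑ α ∈ nthRootsFinset n (1 : K), α ^ k = if n ∣ k then (n : K) else 0 := by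
  have hmem (α : K) : α ∈ nthRootsFinset n (1 : K) ↔ α ^ n = 1 :=
    Polynomial.mem_nthRootsFinset (Nat.pos_of_ne_zero hn) 1
  split_ifs with hk
  · obtain ⟨m, rfl⟩ := hk
    rw [Finset.sum_congr rfl fun α hα => by rw [pow_mul, (hmem α).1 hα, one_pow],
      Finset.sum_const, hζ.card_nthRootsFinset, nsmul_one]
  · have hζ0 : ζ ≠ 0 := hζ.ne_zero hn
    -- multiplication by `ζ` permutes the `n`-th roots of unity
    have hshift : ∑ α ∈ nthRootsFinset n (1 : K), α ^ k =
        ζ ^ k * ∑ α ∈ nthRootsFinset n (1 : K), α ^ k := by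
      rw [Finset.mul_sum]
      refine Finset.sum_nbij' (ζ⁻¹ * ·) (ζ * ·) ?_ ?_ ?_ ?_ ?_ <;> intro α hα
      · simp_all [mul_pow, hζ.pow_eq_one]
      · simp_all [mul_pow, hζ.pow_eq_one]
      · simp [hζ0]
      · simp [hζ0]
      · simp [← mul_pow, hζ0]
    have hζk : ζ ^ k ≠ 1 := fun h => hk ((hζ.pow_eq_one_iff_dvd k).1 h)
    have hzero : (1 - ζ ^ k) * ∑ α ∈ nthRootsFinset n (1 : K), α ^ k = 0 := by
      rw [one_sub_mul, ← hshift, sub_self]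
    exact (mul_eq_zero.1 hzero).resolve_left (sub_ne_zero.2 hζk.symm)

theorem norm_eq_one_of_mem_nthRootsFinset {n : ℕ} (hn : n ≠ 0) {α : ℂ}
    (hα : α ∈ nthRootsFinset n (1 : ℂ)) : ‖α‖ = 1 :=
  norm_eq_one_of_pow_eq_one ((mem_nthRootsFinset (Nat.pos_of_ne_zero hn) 1).1 hα) hn

theorem sum_log_one_sub_mul_nthRootsFinset {n : ℕ} (hn : n ≠ 0) {x : ℂ} (hx : ‖x‖ < 1) :
    ∑ α ∈ nthRootsFinset n (1 : ℂ), log (1 - α * x) = log (1 - x ^ n) := by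
  have hroots : HasSum (fun k : ℕ => ∑ α ∈ nthRootsFinset n (1 : ℂ), (α * x) ^ k / k)
      (∑ α ∈ nthRootsFinset n (1 : ℂ), -log (1 - α * x)) := by
    refine hasSum_sum fun α hα => hasSum_taylorSeries_neg_log ?_
    rwa [norm_mul, norm_eq_one_of_mem_nthRootsFinset hn hα, one_mul]
  have hpow : HasSum (fun m : ℕ => (x ^ n) ^ m / m) (-log (1 - x ^ n)) :=
    hasSum_taylorSeries_neg_log (by rw [norm_pow]; exact pow_lt_one₀ (norm_nonneg x) hx hn)
  set f : ℕ → ℂ := fun k => if n ∣ k then n * x ^ k / k else 0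
  have hterm (k : ℕ) : ∑ α ∈ nthRootsFinset n (1 : ℂ), (α * x) ^ k / k = f k := by
    simp_rw [f, mul_pow, mul_div_assoc, ← Finset.sum_mul,
      (isPrimitiveRoot_exp n hn).sum_nthRootsFinset_pow hn]
    split_ifs <;> ring
  have hvanish : ∀ k ∉ Set.range (n * ·), f k = 0 := fun k hk =>
    if_neg fun ⟨m, hm⟩ => hk ⟨m, hm.symm⟩
  have hmultiples : f ∘ (n * ·) = fun m : ℕ => (x ^ n) ^ m / m := by
    ext m
    rcases eq_or_ne m 0 with rfl | hm
    · simp [f]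
    · simp only [f, Function.comp_apply, dvd_mul_right, if_true, pow_mul, Nat.cast_mul]
      field_simp
  rw [funext hterm, ← (mul_right_injective₀ hn).hasSum_iff hvanish, hmultiples] at hroots
  simpa using hroots.unique hpow

theorem norm_tpow (z : ℂ) {t : ℝ} (ht : 0 < t) : ‖tpow z t‖ = t ^ z.re := by
  rw [tpow, norm_exp, Real.rpow_def_of_pos ht, mul_comm]
  simp

theorem norm_mul_tpow_le {c : ℂ} (hc : ‖c‖ ≤ 1) (z : ℂ) {t : ℝ} (ht : 0 < t) :
    ‖c * tpow z t‖ ≤ t ^ z.re := by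
  rw [norm_mul, norm_tpow z ht]
  exact mul_le_of_le_one_left (Real.rpow_nonneg ht.le _) hc

theorem norm_mul_tpow_lt_one {c z : ℂ} (hc : ‖c‖ ≤ 1) (hz : 0 < z.re) {t : ℝ}
    (ht : t ∈ Set.Ioo 0 1) : ‖c * tpow z t‖ < 1 :=
  (norm_mul_tpow_le hc z ht.1).trans_lt (Real.rpow_lt_one ht.1.le ht.2 hz)

@[fun_prop]
theorem measurable_tpow (z : ℂ) : Measurable (tpow z) := by
  unfold tpow
  fun_prop

theorem norm_log_one_sub_le {x : ℂ} (hx : ‖x‖ < 1) : ‖log (1 - x)‖ ≤ -Real.log (1 - ‖x‖) := by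
  rw [← norm_neg]
  refine (hasSum_taylorSeries_neg_log' hx).norm_le_of_bounded
    (Real.hasSum_pow_div_log_of_abs_lt_one (by rwa [abs_norm])) fun k => ?_
  rw [norm_div, norm_pow]
  norm_cast

theorem min_mul_one_sub_le_one_sub_rpow {a t : ℝ} (ha : 0 < a) (ht0 : 0 ≤ t) (ht1 : t ≤ 1) :
    min a 1 * (1 - t) ≤ 1 - t ^ a := by
  rcases le_total a 1 with ha1 | ha1
  · have := rpow_one_add_le_one_add_mul_self (s := t - 1) (by linarith) ha.le ha1
    rw [add_sub_cancel] at this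
    rw [min_eq_left ha1]
    linarith
  · have := Real.rpow_le_rpow_of_exponent_ge' ht0 ht1 zero_le_one ha1
    rw [Real.rpow_one] at this
    rw [min_eq_right ha1]
    linarith

theorem neg_log_le_four_mul_rpow {y : ℝ} (hy : 0 < y) : -Real.log y ≤ 4 * y ^ (-(4⁻¹ : ℝ)) := by
  have := Real.log_le_rpow_div (inv_nonneg.2 hy.le) (by norm_num : (0 : ℝ) < 4⁻¹)
  rw [Real.log_inv, Real.inv_rpow hy.le, ← Real.rpow_neg hy.le, div_inv_eq_mul, mul_comm] at this
  exact this

theorem norm_log_one_sub_mul_tpow_le {c z : ℂ} (hc : ‖c‖ ≤ 1) (hz : 0 < z.re) {t : ℝ}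
    (ht : t ∈ Set.Ioo 0 1) :
    ‖log (1 - c * tpow z t)‖ ≤ 4 * (min z.re 1 * (1 - t)) ^ (-(4⁻¹ : ℝ)) := by
  have hlin : 0 < min z.re 1 * (1 - t) := mul_pos (lt_min hz one_pos) (by linarith [ht.2])
  calc ‖log (1 - c * tpow z t)‖
      ≤ -Real.log (1 - ‖c * tpow z t‖) := norm_log_one_sub_le (norm_mul_tpow_lt_one hc hz ht)
    _ ≤ -Real.log (min z.re 1 * (1 - t)) := by
        gcongr
        linarith [norm_mul_tpow_le hc z ht.1, min_mul_one_sub_le_one_sub_rpow hz ht.1.le ht.2.le]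
    _ ≤ 4 * (min z.re 1 * (1 - t)) ^ (-(4⁻¹ : ℝ)) := neg_log_le_four_mul_rpow hlin

theorem intervalIntegrable_log_one_sub_mul_tpow_mul {c₁ c₂ z : ℂ} (hc₁ : ‖c₁‖ ≤ 1)
    (hc₂ : ‖c₂‖ ≤ 1) (hz : 0 < z.re) :
    IntervalIntegrable (fun t => log (1 - c₁ * tpow z t) * log (1 - c₂ * tpow z t)) volume 0 1 := by
  set m := min z.re 1
  have hm : 0 < m := lt_min hz one_pos
  have hbound : IntervalIntegrable
      (fun t : ℝ => 16 * m ^ (-(2⁻¹ : ℝ)) * (1 - t) ^ (-(2⁻¹ : ℝ))) volume 0 1 := by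
    refine .const_mul ?_ _
    simpa using (intervalIntegral.intervalIntegrable_rpow' (a := 1) (b := 0)
      (r := -(2⁻¹ : ℝ)) (by norm_num)).comp_sub_left 1
  refine hbound.mono_fun' (Measurable.aestronglyMeasurable (by fun_prop)) ?_
  filter_upwards [ae_restrict_mem measurableSet_uIoc,
    ae_restrict_of_ae (Measure.ae_ne volume 1)] with t ht ht1
  rw [Set.uIoc_of_le zero_le_one] at ht
  have ht' : t ∈ Set.Ioo 0 1 := ⟨ht.1, lt_of_le_of_ne ht.2 ht1⟩
  have hlin : 0 ≤ m * (1 - t) := by nlinarith [ht'.2]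
  calc ‖log (1 - c₁ * tpow z t) * log (1 - c₂ * tpow z t)‖
      ≤ (4 * (m * (1 - t)) ^ (-(4⁻¹ : ℝ))) * (4 * (m * (1 - t)) ^ (-(4⁻¹ : ℝ))) := by
        rw [norm_mul]
        exact mul_le_mul (norm_log_one_sub_mul_tpow_le hc₁ hz ht')
          (norm_log_one_sub_mul_tpow_le hc₂ hz ht') (norm_nonneg _) (by positivity)
    _ = 16 * m ^ (-(2⁻¹ : ℝ)) * (1 - t) ^ (-(2⁻¹ : ℝ)) := by
        rw [mul_mul_mul_comm, ← Real.rpow_add' hlin (by norm_num),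
          Real.mul_rpow hm.le (by linarith [ht'.2]), show -(4⁻¹ : ℝ) + -4⁻¹ = -2⁻¹ by norm_num]
        ring

theorem inv_sub_ofReal_ne_zero {v : ℂ} (hv0 : v ≠ 0) (hv1 : ‖v‖ ≤ 1) (hv2 : v ≠ 1) {t : ℝ}
    (ht : t ∈ Set.Icc 0 1) : v⁻¹ - t ≠ 0 := by
  intro h
  have hvt : v = ((t⁻¹ : ℝ) : ℂ) := by
    rw [ofReal_inv, ← sub_eq_zero.1 h, inv_inv]
  have ht0 : 0 < t := by
    rcases ht.1.eq_or_lt with rfl | h0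
    · simp [hvt] at hv0
    · exact h0
  have : t⁻¹ ≤ 1 := by
    rwa [hvt, norm_real, Real.norm_of_nonneg (inv_nonneg.2 ht0.le)] at hv1
  have ht1 : t = 1 := le_antisymm ht.2 (by simpa using (inv_le_one₀ ht0).1 this)
  exact hv2 (by simp [hvt, ht1])

noncomputable def f3Integrand (z u v w : ℂ) (t : ℝ) : ℂ :=
  log (1 - u * tpow z t) * log (1 - w * tpow z t) / (v⁻¹ - (t : ℂ))

theorem F3_eq_integral (z u v w : ℂ) : F3 z u v w = ∫ t in (0 : ℝ)..1, f3Integrand z u v w t :=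
  rfl

theorem intervalIntegrable_f3Integrand {z u v w : ℂ} (hz : 0 < z.re) (hu : ‖u‖ ≤ 1)
    (hw : ‖w‖ ≤ 1) (hv0 : v ≠ 0) (hv1 : ‖v‖ ≤ 1) (hv2 : v ≠ 1) :
    IntervalIntegrable (f3Integrand z u v w) volume 0 1 := by
  have hden : ContinuousOn (fun t : ℝ => (v⁻¹ - (t : ℂ))⁻¹) (Set.uIcc 0 1) := by
    refine ContinuousOn.inv₀ (by fun_prop) fun t ht => inv_sub_ofReal_ne_zero hv0 hv1 hv2 ?_
    rwa [Set.uIcc_of_le zero_le_one] at ht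
  unfold f3Integrand
  simpa only [div_eq_mul_inv] using
    (intervalIntegrable_log_one_sub_mul_tpow_mul hu hw hz).mul_continuousOn hden

theorem f3Integrand_nat_mul_pow {n : ℕ} (hn : n ≠ 0) {z u w : ℂ} (hz : 0 < z.re) (hu : ‖u‖ ≤ 1)
    (hw : ‖w‖ ≤ 1) (v : ℂ) {t : ℝ} (ht : t ∈ Set.Ioo 0 1) :
    f3Integrand (n * z) (u ^ n) v (w ^ n) t =
      ∑ α ∈ nthRootsFinset n (1 : ℂ), ∑ β ∈ nthRootsFinset n (1 : ℂ),
        f3Integrand z (u * α) v (w * β) t := by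
  have htpow : tpow (n * z) t = tpow z t ^ n := by
    rw [tpow, tpow, mul_assoc, exp_nat_mul]
  simp only [f3Integrand, htpow, ← mul_pow,
    ← sum_log_one_sub_mul_nthRootsFinset hn (norm_mul_tpow_lt_one hu hz ht),
    ← sum_log_one_sub_mul_nthRootsFinset hn (norm_mul_tpow_lt_one hw hz ht),
    Finset.sum_mul_sum, Finset.sum_div]
  simp only [mul_assoc, mul_left_comm]

theorem statement4_general (n : ℕ) (hn : 1 ≤ n) (z u v w : ℂ) (hz : 0 < z.re)
    (hun1 : ‖u ^ n‖ ≤ 1)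
    (hwn1 : ‖w ^ n‖ ≤ 1)
    (hv0 : v ≠ 0) (hv1 : ‖v‖ ≤ 1) (hv2 : v ≠ 1) :
    F3 ((n : ℂ) * z) (u ^ n) v (w ^ n) =
      ∑ α ∈ nthRootsFinset n (1 : ℂ), ∑ β ∈ nthRootsFinset n (1 : ℂ), F3 z (u * α) v (w * β) := by
  have hn0 : n ≠ 0 := Nat.one_le_iff_ne_zero.1 hn
  have hu : ‖u‖ ≤ 1 := (pow_le_one_iff_of_nonneg (norm_nonneg u) hn0).1 (norm_pow u n ▸ hun1)
  have hw : ‖w‖ ≤ 1 := (pow_le_one_iff_of_nonneg (norm_nonneg w) hn0).1 (norm_pow w n ▸ hwn1)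
  have hroot {c α : ℂ} (hc : ‖c‖ ≤ 1) (hα : α ∈ nthRootsFinset n (1 : ℂ)) : ‖c * α‖ ≤ 1 := by
    rwa [norm_mul, norm_eq_one_of_mem_nthRootsFinset hn0 hα, mul_one]
  have hint (p) (hp : p ∈ nthRootsFinset n (1 : ℂ) ×ˢ nthRootsFinset n (1 : ℂ)) :
      IntervalIntegrable (f3Integrand z (u * p.1) v (w * p.2)) volume 0 1 :=
    intervalIntegrable_f3Integrand hz (hroot hu (Finset.mem_product.1 hp).1)
      (hroot hw (Finset.mem_product.1 hp).2) hv0 hv1 hv2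
  simp only [F3_eq_integral]
  rw [← Finset.sum_product' (f := fun α β => ∫ t in (0 : ℝ)..1, f3Integrand z (u * α) v (w * β) t),
    ← intervalIntegral.integral_finsetSum hint]
  refine intervalIntegral.integral_congr_ae ?_
  filter_upwards [Measure.ae_ne volume 1] with t ht1 ht
  rw [Set.uIoc_of_le zero_le_one] at ht
  rw [Finset.sum_product' (f := fun α β => f3Integrand z (u * α) v (w * β) t),
    f3Integrand_nat_mul_pow hn0 hz hu hw v ⟨ht.1, ht.2.lt_of_ne ht1⟩]

theorem statement4 (n : ℕ) (hn : 1 ≤ n) (z u v w : ℂ) (hz : 0 < z.re)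
    (hun0 : u ^ n ≠ 0) (hun1 : ‖u ^ n‖ ≤ 1)
    (hwn0 : w ^ n ≠ 0) (hwn1 : ‖w ^ n‖ ≤ 1)
    (hv0 : v ≠ 0) (hv1 : ‖v‖ ≤ 1) (hv2 : v ≠ 1) :
    F3 ((n : ℂ) * z) (u ^ n) v (w ^ n) =
      ∑ α ∈ nthRootsFinset n (1 : ℂ), ∑ β ∈ nthRootsFinset n (1 : ℂ), F3 z (u * α) v (w * β) :=
  statement4_general n hn z u v w hz hun1 hwn1 hv0 hv1 hv2
end

section
/- Let n ≥ 1 be a natural number and let u, v be complex numbers with u ∈ 𝔻, v ∈ 𝔻' and u ≠ v. Fix a complex number ζ with ζ^n = v such that for every n-th root of unity β the numbers u, βζ/(βζ−1) and (u−βζ)/(1−βζ) lie in the open unit disc and βζ ≠ 1. Then F(1/n; u, v) = n·Li₂(u) + ∑_{β^n=1} [ Li₂(βζ/(βζ−1)) − Li₂((u−βζ)/(1−βζ)) ], where the sum runs over all n-th roots of unity β. -/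
open Complex MeasureTheory Polynomial

/-- The Herglotz–Zagier–Novikov function `F(z;u,v) = ∫₀¹ log(1 − u t^z)/(v⁻¹ − t) dt`. -/
noncomputable def F (z u v : ℂ) : ℂ :=
  ∫ t in (0:ℝ)..1, Complex.log (1 - u * tpow z t) / (v⁻¹ - (t : ℂ))

/-- The polylogarithm `Li_s(z) = ∑_{n≥1} z^n / n^s`. -/
noncomputable def Li (s : ℕ) (z : ℂ) : ℂ := ∑' n : ℕ, z ^ (n + 1) / ((n : ℂ) + 1) ^ s

/-!
Substituting `t = sⁿ` and expanding `n v sⁿ⁻¹ / (1 - v sⁿ) = ∑_β βζ / (1 - βζ s)` into partial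
fractions splits `F(1/n; u, v)` into the integrals `∫₀¹ log(1 - u s) · w / (1 - w s) ds`,
`w = βζ`. Each of these is evaluated by the fundamental theorem of calculus: the Möbius
substitutions satisfy `d/ds Li₂(a s / (1 - b s)) = -log(1 - a s / (1 - b s)) / (s (1 - b s))`,
so `Li₂(u s) + Li₂(-w s / (1 - w s)) - Li₂((u - w) s / (1 - w s))` is a primitive: the three
logarithms `log(1 - u s)`, `log (1 / (1 - w s))` and `log ((1 - u s) / (1 - w s))` combine
additively because `1 - u s` and `1 - w s` lie in the right half-plane.
-/

open Set Metric Filter intervalIntegral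

noncomputable def dilogDeriv (z : ℂ) : ℂ := ∑' n : ℕ, z ^ n / ((n : ℂ) + 1)

lemma norm_pow_div_natCast_add_one_le (z : ℂ) (n : ℕ) : ‖z ^ n / ((n : ℂ) + 1)‖ ≤ ‖z‖ ^ n := by
  rw [norm_div, norm_pow]
  exact div_le_self (by positivity) (by norm_cast; simp)

lemma mul_dilogDeriv {z : ℂ} (hz : ‖z‖ < 1) : z * dilogDeriv z = -log (1 - z) := by
  have hsum : Summable fun n : ℕ => z ^ n / ((n : ℂ) + 1) :=
    .of_norm_bounded (summable_geometric_of_lt_one (norm_nonneg z) hz)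
      (norm_pow_div_natCast_add_one_le z)
  have hlog := (hasSum_nat_add_iff' 1).mpr (hasSum_taylorSeries_neg_log hz)
  simp only [Finset.range_one, Finset.sum_singleton, pow_zero, Nat.cast_zero, div_zero,
    sub_zero, Nat.cast_add, Nat.cast_one] at hlog
  refine (hsum.hasSum.mul_left z).unique ?_
  simpa only [pow_succ', mul_div_assoc] using hlog

lemma hasDerivAt_Li_two {z : ℂ} (hz : ‖z‖ < 1) : HasDerivAt (Li 2) (dilogDeriv z) z := by
  obtain ⟨r, hzr, hr⟩ := exists_between hz
  refine hasDerivAt_tsum_of_isPreconnected (u := fun n : ℕ => r ^ n)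
    (g := fun n y => y ^ (n + 1) / ((n : ℂ) + 1) ^ 2) (g' := fun n y => y ^ n / ((n : ℂ) + 1))
    (summable_geometric_of_lt_one ((norm_nonneg z).trans hzr.le) hr) isOpen_ball
    (convex_ball 0 r).isPreconnected (fun n y _ => ?_) (fun n y hy => ?_)
    (mem_ball_self ((norm_nonneg z).trans_lt hzr)) (by simp) (mem_ball_zero_iff.mpr hzr)
  · refine ((hasDerivAt_pow (n + 1) y).div_const _).congr_deriv ?_
    have : (n : ℂ) + 1 ≠ 0 := by norm_cast
    rw [Nat.add_sub_cancel]
    push_cast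
    field_simp
  · exact (norm_pow_div_natCast_add_one_le y n).trans
      (pow_le_pow_left₀ (norm_nonneg y) (mem_ball_zero_iff.mp hy).le n)

lemma continuousOn_Li_two : ContinuousOn (Li 2) (ball 0 1) := fun _ hz =>
  (hasDerivAt_Li_two (mem_ball_zero_iff.mp hz)).continuousAt.continuousWithinAt

lemma hasDerivAt_Li_two_mul_div {a b : ℂ} {s : ℝ} (hs : s ≠ 0) (hb : 1 - b * s ≠ 0)
    (hz : ‖a * s / (1 - b * s)‖ < 1) :
    HasDerivAt (fun t : ℝ => Li 2 (a * t / (1 - b * t)))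
      (-log (1 - a * s / (1 - b * s)) / (s * (1 - b * s))) s := by
  have hmob : HasDerivAt (fun τ : ℂ => a * τ / (1 - b * τ)) (a / (1 - b * s) ^ 2) s := by
    refine (((hasDerivAt_id' _).const_mul a).div
      (((hasDerivAt_id' _).const_mul b).const_sub 1) hb).congr_deriv ?_
    field_simp
    ring
  refine (((hasDerivAt_Li_two hz).comp (h := fun τ : ℂ => a * τ / (1 - b * τ)) _
    hmob).comp_ofReal).congr_deriv ?_
  rw [← mul_dilogDeriv hz]
  have hs' : (s : ℂ) ≠ 0 := by exact_mod_cast hs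
  field_simp

lemma continuousOn_Li_two_mul_div {a b : ℂ} {S : Set ℝ} (hb : ∀ s ∈ S, 1 - b * s ≠ 0)
    (hz : ∀ s ∈ S, ‖a * s / (1 - b * s)‖ < 1) :
    ContinuousOn (fun t : ℝ => Li 2 (a * t / (1 - b * t))) S :=
  continuousOn_Li_two.comp (ContinuousOn.div (by fun_prop) (by fun_prop) hb)
    fun s hs => mem_ball_zero_iff.mpr (hz s hs)

lemma norm_lt_norm_one_sub_iff {z : ℂ} : ‖z‖ < ‖1 - z‖ ↔ z.re < 1 / 2 := by
  rw [← sq_lt_sq₀ (norm_nonneg _) (norm_nonneg _), Complex.sq_norm, Complex.sq_norm,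
    normSq_apply, normSq_apply]
  simp only [sub_re, one_re, sub_im, one_im]
  constructor <;> intro h <;> nlinarith

lemma re_lt_half_of_norm_div_sub_one_lt_one {w : ℂ} (hw : ‖w / (w - 1)‖ < 1) (hw1 : w ≠ 1) :
    w.re < 1 / 2 := by
  rwa [norm_div, div_lt_one (norm_pos_iff.mpr (sub_ne_zero.mpr hw1)), norm_sub_rev,
    norm_lt_norm_one_sub_iff] at hw

lemma re_one_sub_pos_of_re_lt_half {z : ℂ} (hz : z.re < 1 / 2) : 0 < (1 - z).re := by
  rw [sub_re, one_re]; linarith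

lemma re_one_sub_pos_of_norm_lt_one {z : ℂ} (hz : ‖z‖ < 1) : 0 < (1 - z).re := by
  rw [sub_re, one_re]; linarith [re_le_norm z]

lemma norm_neg_div_one_sub_lt_one {z : ℂ} (hz : z.re < 1 / 2) : ‖-z / (1 - z)‖ < 1 := by
  have hz0 : 1 - z ≠ 0 := fun h => by simpa [h] using re_one_sub_pos_of_re_lt_half hz
  rwa [norm_div, div_lt_one (norm_pos_iff.mpr hz0), norm_neg, norm_lt_norm_one_sub_iff]

lemma log_div_of_re_pos {a b : ℂ} (ha : 0 < a.re) (hb : 0 < b.re) :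
    log (a / b) = log a - log b := by
  have ha' := abs_lt.mp (abs_arg_lt_pi_div_two_iff.mpr (.inl ha))
  have hb' := abs_lt.mp (abs_arg_lt_pi_div_two_iff.mpr (.inl hb))
  have hbπ : b.arg ≠ Real.pi := (by linarith [Real.pi_pos] : b.arg < Real.pi).ne
  rw [div_eq_mul_inv, log_mul (fun h => by simp [h] at ha) (inv_ne_zero fun h => by simp [h] at hb),
    log_inv b hbπ, sub_eq_add_neg]
  rw [arg_inv, if_neg hbπ]
  constructor <;> linarith

lemma re_mul_ofReal_lt_half {w : ℂ} (hw : w.re < 1 / 2) {s : ℝ} (hs : s ∈ Icc (0 : ℝ) 1) :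
    (w * s).re < 1 / 2 := by
  rw [re_mul_ofReal]
  rcases le_or_gt w.re 0 with h | h <;> nlinarith [hs.1, hs.2]

lemma norm_mul_ofReal_lt_one {u : ℂ} (hu : ‖u‖ < 1) {s : ℝ} (hs : s ∈ Icc (0 : ℝ) 1) :
    ‖u * s‖ < 1 := by
  rw [norm_mul, norm_real, Real.norm_of_nonneg hs.1]
  nlinarith [norm_nonneg u, hs.2]

lemma one_sub_mul_ofReal_ne_zero {w : ℂ} (hw : w.re < 1 / 2) {s : ℝ} (hs : s ∈ Icc (0 : ℝ) 1) :
    1 - w * s ≠ 0 := fun h => by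
  simpa [h] using re_one_sub_pos_of_re_lt_half (re_mul_ofReal_lt_half hw hs)

/- `‖1 - w s‖² - s² ‖u - w‖²` is quadratic in `s` and positive at `s = 0` and `s = 1`: if it is
concave it stays positive in between, otherwise it is at least `1 - 2 s Re w > 0`. -/
lemma norm_sub_mul_ofReal_lt {u w : ℂ} (hw : w.re < 1 / 2) (huw : ‖u - w‖ < ‖1 - w‖) {s : ℝ}
    (hs : s ∈ Icc (0 : ℝ) 1) : ‖(u - w) * s‖ < ‖1 - w * s‖ := by
  have hsq : ∀ t : ℝ, ‖1 - w * t‖ ^ 2 = 1 - 2 * t * w.re + t ^ 2 * ‖w‖ ^ 2 := fun t => by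
    simp only [Complex.sq_norm, normSq_apply, sub_re, sub_im, mul_re, mul_im, one_re, one_im,
      ofReal_re, ofReal_im]
    ring
  have hsw : s * w.re < 1 / 2 := by simpa [mul_comm] using re_mul_ofReal_lt_half hw hs
  rw [← sq_lt_sq₀ (norm_nonneg _) (norm_nonneg _)] at huw ⊢
  rw [norm_mul, norm_real, mul_pow, Real.norm_eq_abs, sq_abs, hsq]
  rw [show (1 : ℂ) - w = 1 - w * (1 : ℝ) by simp, hsq] at huw
  obtain ⟨hs0, hs1⟩ := hs
  rcases le_or_gt ‖u - w‖ ‖w‖ with hc | hc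
  · nlinarith [mul_nonneg (sq_nonneg s) (sub_nonneg.mpr (pow_le_pow_left₀ (norm_nonneg _) hc 2))]
  · nlinarith [mul_nonneg (mul_nonneg hs0 (sub_nonneg.mpr hs1))
      (sub_nonneg.mpr (pow_le_pow_left₀ (norm_nonneg _) hc.le 2))]

lemma hasDerivAt_Li_two_primitive {u w : ℂ} {s : ℝ} (hs : s ≠ 0) (hu : ‖u * s‖ < 1)
    (hw : (w * s).re < 1 / 2) (huw : ‖(u - w) * s‖ < ‖1 - w * s‖) :
    HasDerivAt (fun t : ℝ => Li 2 (u * t) + Li 2 (-w * t / (1 - w * t)) -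
      Li 2 ((u - w) * t / (1 - w * t))) (log (1 - u * s) * (w / (1 - w * s))) s := by
  have hb := re_one_sub_pos_of_re_lt_half hw
  have hb0 : 1 - w * s ≠ 0 := fun h => by simp [h] at hb
  have h1 : HasDerivAt (fun t : ℝ => Li 2 (u * t)) (-log (1 - u * s) / s) s := by
    simpa using hasDerivAt_Li_two_mul_div (a := u) (b := 0) hs (by simp) (by simpa using hu)
  have h2 := hasDerivAt_Li_two_mul_div (a := -w) hs hb0 (by
    rw [neg_mul]; exact norm_neg_div_one_sub_lt_one hw)
  have h3 := hasDerivAt_Li_two_mul_div (a := u - w) hs hb0 (by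
    rwa [norm_div, div_lt_one (norm_pos_iff.mpr hb0)])
  refine ((h1.add h2).sub h3).congr_deriv ?_
  rw [show 1 - -w * s / (1 - w * s) = 1 / (1 - w * s) by field_simp; ring,
    show 1 - (u - w) * s / (1 - w * s) = (1 - u * s) / (1 - w * s) by field_simp; ring,
    log_div_of_re_pos one_pos hb, log_div_of_re_pos (re_one_sub_pos_of_norm_lt_one hu) hb,
    log_one]
  have hs' : (s : ℂ) ≠ 0 := by exact_mod_cast hs
  have hb0' : 1 - (s : ℂ) * w ≠ 0 := by rwa [mul_comm]
  field_simp
  ring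

lemma intervalIntegrable_log_one_sub_mul_mul_div {u w : ℂ} (hu : ‖u‖ < 1) (hw : w.re < 1 / 2) :
    IntervalIntegrable (fun s : ℝ => log (1 - u * s) * (w / (1 - w * s))) volume 0 1 := by
  refine ContinuousOn.intervalIntegrable_of_Icc zero_le_one (ContinuousOn.mul ?_ ?_)
  · refine ContinuousOn.clog (by fun_prop) fun s hs => mem_slitPlane_iff.mpr (.inl ?_)
    exact re_one_sub_pos_of_norm_lt_one (norm_mul_ofReal_lt_one hu hs)
  · exact ContinuousOn.div (by fun_prop) (by fun_prop) fun s hs => one_sub_mul_ofReal_ne_zero hw hs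

theorem integral_log_one_sub_mul_mul_div {u w : ℂ} (hu : ‖u‖ < 1) (hw : w.re < 1 / 2)
    (huw : ‖u - w‖ < ‖1 - w‖) :
    ∫ s in (0 : ℝ)..1, log (1 - u * s) * (w / (1 - w * s)) =
      Li 2 u + (Li 2 (w / (w - 1)) - Li 2 ((u - w) / (1 - w))) := by
  have hu' : ∀ s ∈ Icc (0 : ℝ) 1, ‖u * s‖ < 1 := fun s hs => norm_mul_ofReal_lt_one hu hs
  have hb : ∀ s ∈ Icc (0 : ℝ) 1, 1 - w * s ≠ 0 := fun s hs => one_sub_mul_ofReal_ne_zero hw hs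
  have hw' : ∀ s ∈ Icc (0 : ℝ) 1, ‖-w * s / (1 - w * s)‖ < 1 := fun s hs => by
    rw [neg_mul]; exact norm_neg_div_one_sub_lt_one (re_mul_ofReal_lt_half hw hs)
  have huw' : ∀ s ∈ Icc (0 : ℝ) 1, ‖(u - w) * s / (1 - w * s)‖ < 1 := fun s hs => by
    rw [norm_div, div_lt_one (norm_pos_iff.mpr (hb s hs))]
    exact norm_sub_mul_ofReal_lt hw huw hs
  rw [integral_eq_sub_of_hasDerivAt_of_le zero_le_one
    (((continuousOn_Li_two.comp (by fun_prop) fun s hs => mem_ball_zero_iff.mpr (hu' s hs)).add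
      (continuousOn_Li_two_mul_div hb hw')).sub (continuousOn_Li_two_mul_div hb huw'))
    (fun s hs => hasDerivAt_Li_two_primitive hs.1.ne' (hu' s (Ioo_subset_Icc_self hs))
      (re_mul_ofReal_lt_half hw (Ioo_subset_Icc_self hs))
      (norm_sub_mul_ofReal_lt hw huw (Ioo_subset_Icc_self hs)))
    (intervalIntegrable_log_one_sub_mul_mul_div hu hw)]
  have h0 : Li 2 0 = 0 := by simp [Li]
  have hw1 : -w / (1 - w) = w / (w - 1) := by rw [← neg_sub w 1, neg_div_neg_eq]
  simp [h0, hw1]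
  ring

lemma integral_unitInterval_eq_integral_comp_pow {E : Type*} [NormedAddCommGroup E]
    [NormedSpace ℝ E] {n : ℕ} (hn : n ≠ 0) (g : ℝ → E) :
    ∫ t in (0 : ℝ)..1, g t = ∫ s in (0 : ℝ)..1, ((n : ℝ) * s ^ (n - 1)) • g (s ^ n) := by
  have himage : (fun s : ℝ => s ^ n) '' Icc 0 1 = Icc 0 1 := by
    refine subset_antisymm ?_ ?_
    · rintro _ ⟨s, hs, rfl⟩
      exact ⟨pow_nonneg hs.1 n, pow_le_one₀ hs.1 hs.2⟩
    · simpa [zero_pow hn] using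
        intermediate_value_Icc (zero_le_one' ℝ) (continuous_pow n).continuousOn
  rw [integral_of_le zero_le_one, integral_of_le zero_le_one, ← integral_Icc_eq_integral_Ioc,
    ← integral_Icc_eq_integral_Ioc]
  conv_lhs => rw [← himage, integral_image_eq_integral_abs_deriv_smul
    measurableSet_Icc (fun s _ => (hasDerivAt_pow n s).hasDerivWithinAt)
    ((pow_left_strictMonoOn₀ hn).injOn.mono fun s hs => hs.1)]
  refine setIntegral_congr_fun measurableSet_Icc fun s (hs : s ∈ Icc (0 : ℝ) 1) => ?_
  rw [abs_of_nonneg (by have := hs.1; positivity)]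

lemma tpow_inv_natCast_pow {n : ℕ} (hn : n ≠ 0) {s : ℝ} (hs : 0 < s) :
    tpow (n : ℂ)⁻¹ (s ^ n) = s := by
  rw [tpow, Real.log_pow, ofReal_mul, ofReal_natCast, inv_mul_cancel_left₀ (by exact_mod_cast hn),
    ← ofReal_exp, Real.exp_log hs]

lemma F_inv_natCast {n : ℕ} (hn : n ≠ 0) (u v : ℂ) :
    F (n : ℂ)⁻¹ u v =
      ∫ s in (0 : ℝ)..1, (n * (s : ℂ) ^ (n - 1)) * (log (1 - u * s) / (v⁻¹ - (s : ℂ) ^ n)) := by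
  rw [F, integral_unitInterval_eq_integral_comp_pow hn]
  refine integral_congr_ae (Eventually.of_forall fun s hs => ?_)
  rw [uIoc_of_le zero_le_one] at hs
  rw [tpow_inv_natCast_pow hn hs.1, real_smul]
  push_cast
  rfl

lemma prod_nthRootsFinset_one_sub_mul {n : ℕ} (hn : n ≠ 0) (x : ℂ) :
    ∏ β ∈ nthRootsFinset n (1 : ℂ), (1 - β * x) = 1 - x ^ n := by
  simpa using ((isPrimitiveRoot_exp n hn).pow_sub_pow_eq_prod_sub_mul 1 x
    (Nat.pos_of_ne_zero hn)).symm

lemma sum_nthRootsFinset_div_one_sub_mul {n : ℕ} (hn : n ≠ 0) {x : ℂ} (hx : x ^ n ≠ 1) :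
    ∑ β ∈ nthRootsFinset n (1 : ℂ), β / (1 - β * x) = n * x ^ (n - 1) / (1 - x ^ n) := by
  have hprod := prod_nthRootsFinset_one_sub_mul hn
  have hx' : 1 - x ^ n ≠ 0 := sub_ne_zero.mpr hx.symm
  have hne : ∀ β ∈ nthRootsFinset n (1 : ℂ), 1 - β * x ≠ 0 :=
    Finset.prod_ne_zero_iff.mp (hprod x ▸ hx')
  have hlog := logDeriv_prod (f := fun β y => 1 - β * y) hne (fun β _ => by fun_prop)
  simp only [hprod, logDeriv_apply, differentiableAt_const, differentiableAt_fun_id, DifferentiableAt.fun_pow,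
    deriv_fun_sub, deriv_const', deriv_fun_pow, deriv_id'', mul_one, zero_sub, neg_div,
    deriv_const_sub', deriv_const_mul_id', Finset.sum_neg_distrib, neg_inj] at hlog
  exact hlog.symm

lemma natCast_mul_pow_div_inv_sub_pow {n : ℕ} (hn : n ≠ 0) {ζ : ℂ} (hζ : ζ ≠ 0) {s : ℂ}
    (hs : ζ ^ n * s ^ n ≠ 1) :
    n * s ^ (n - 1) / ((ζ ^ n)⁻¹ - s ^ n) =
      ∑ β ∈ nthRootsFinset n (1 : ℂ), β * ζ / (1 - β * ζ * s) := by
  obtain ⟨m, rfl⟩ : ∃ m, n = m + 1 := ⟨n - 1, by omega⟩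
  have hs' : 1 - ζ ^ (m + 1) * s ^ (m + 1) ≠ 0 := sub_ne_zero.mpr hs.symm
  simp_rw [mul_assoc, ← div_mul_eq_mul_div, ← Finset.sum_mul]
  rw [sum_nthRootsFinset_div_one_sub_mul hn (by rwa [mul_pow])]
  rw [Nat.add_sub_cancel, mul_pow, mul_pow]
  field_simp
  ring

lemma mul_ofReal_ne_one {v : ℂ} (hv : ‖v‖ ≤ 1) (hv1 : v ≠ 1) {t : ℝ} (ht : t ∈ Icc (0 : ℝ) 1) :
    v * t ≠ 1 := by
  intro h
  have hnorm : ‖v‖ * t = 1 := by simpa [Real.norm_of_nonneg ht.1] using congrArg norm h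
  have ht1 : t = 1 := by nlinarith [ht.2, mul_le_mul_of_nonneg_right hv ht.1]
  exact hv1 (by simpa [ht1] using h)

theorem statement17_general (n : ℕ) (hn : 1 ≤ n) (u v ζ : ℂ)
    (hv : v ≠ 0 ∧ ‖v‖ ≤ 1 ∧ v ≠ 1)
    (hζ : ζ ^ n = v)
    (hβ : ∀ β ∈ nthRootsFinset n (1 : ℂ),
      ‖u‖ < 1 ∧ ‖β * ζ / (β * ζ - 1)‖ < 1 ∧
      ‖(u - β * ζ) / (1 - β * ζ)‖ < 1 ∧ β * ζ ≠ 1) :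
    F ((n : ℂ))⁻¹ u v =
      (n : ℂ) * Li 2 u +
        ∑ β ∈ nthRootsFinset n (1 : ℂ),
          (Li 2 (β * ζ / (β * ζ - 1)) - Li 2 ((u - β * ζ) / (1 - β * ζ))) := by
  have hn0 : n ≠ 0 := by omega
  have hu : ‖u‖ < 1 := (hβ 1 (one_mem_nthRootsFinset hn)).1
  have hζ0 : ζ ≠ 0 := by rintro rfl; exact hv.1 (by simp [← hζ, hn0])
  have hw : ∀ β ∈ nthRootsFinset n (1 : ℂ), (β * ζ).re < 1 / 2 := fun β hβR =>
    re_lt_half_of_norm_div_sub_one_lt_one (hβ β hβR).2.1 (hβ β hβR).2.2.2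
  have huw : ∀ β ∈ nthRootsFinset n (1 : ℂ), ‖u - β * ζ‖ < ‖1 - β * ζ‖ := fun β hβR => by
    have h := (hβ β hβR).2.2.1
    rwa [norm_div, div_lt_one (norm_pos_iff.mpr (sub_ne_zero.mpr (hβ β hβR).2.2.2.symm))] at h
  calc F (n : ℂ)⁻¹ u v = ∫ s in (0 : ℝ)..1,
        ∑ β ∈ nthRootsFinset n (1 : ℂ), log (1 - u * s) * (β * ζ / (1 - β * ζ * s)) := by
        rw [F_inv_natCast hn0]
        refine integral_congr fun s hs => ?_
        rw [uIcc_of_le zero_le_one] at hs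
        have hvs := mul_ofReal_ne_one hv.2.1 hv.2.2 ⟨pow_nonneg hs.1 n, pow_le_one₀ hs.1 hs.2⟩
        push_cast at hvs
        simp only [← Finset.mul_sum, ← hζ, ← natCast_mul_pow_div_inv_sub_pow hn0 hζ0 (hζ ▸ hvs)]
        ring
    _ = ∑ β ∈ nthRootsFinset n (1 : ℂ),
          (Li 2 u + (Li 2 (β * ζ / (β * ζ - 1)) - Li 2 ((u - β * ζ) / (1 - β * ζ)))) := by
        rw [integral_finsetSum fun β hβR =>
          intervalIntegrable_log_one_sub_mul_mul_div hu (hw β hβR)]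
        exact Finset.sum_congr rfl fun β hβR =>
          integral_log_one_sub_mul_mul_div hu (hw β hβR) (huw β hβR)
    _ = _ := by
        rw [Finset.sum_add_distrib, Finset.sum_const,
          (isPrimitiveRoot_exp n hn0).card_nthRootsFinset, nsmul_eq_mul]

theorem statement17 (n : ℕ) (hn : 1 ≤ n) (u v ζ : ℂ)
    (hu : u ≠ 0 ∧ ‖u‖ ≤ 1)
    (hv : v ≠ 0 ∧ ‖v‖ ≤ 1 ∧ v ≠ 1)
    (huv : u ≠ v) (hζ : ζ ^ n = v)
    (hβ : ∀ β ∈ nthRootsFinset n (1 : ℂ),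
      ‖u‖ < 1 ∧ ‖β * ζ / (β * ζ - 1)‖ < 1 ∧
      ‖(u - β * ζ) / (1 - β * ζ)‖ < 1 ∧ β * ζ ≠ 1) :
    F ((n : ℂ))⁻¹ u v =
      (n : ℂ) * Li 2 u +
        ∑ β ∈ nthRootsFinset n (1 : ℂ),
          (Li 2 (β * ζ / (β * ζ - 1)) - Li 2 ((u - β * ζ) / (1 - β * ζ))) :=
  statement17_general n hn u v ζ hv hζ hβ
end
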